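/- Let (X_T, Y_T) and (X, Y) be t-structures on a triangulated category D with Y_T ⊆ Y ⊆ Y_T[1], let H_T be the heart of (X_T, Y_T), and let F = H_T ∩ Y. Suppose (T, F) is a torsion pair in H_T. Then Y equals the extension closure ⟨Y_T, F⟩; in particular, setting Y_1 = Y_T[1] ∩ Y and X_1 = ^⊥Y_1, the pair (X_1, Y_1) is a t-structure on D obtained as the HRS-tilt of (X_T, Y_T) at (T, F). -/

import Mathlib

/-!
Truncate `D ∈ Y` for `(X_T, Y_T)` as `A → D → B → A⟦1⟧`. Then `B ∈ Y_T ⊆ Y`, and `A` lies in `Y`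
(it is an extension of `D` by `B⟦-1⟧`) and in `Y_T⟦1⟧` (as `D` and `B` do), so `A ∈ H_T ∩ Y = F`
and `Y = ⟨Y_T, F⟩`. As `Y ⊆ Y_T⟦1⟧`, the pair `(X₁, Y₁)` is just `(X, Y)`. Dually, for `E ∈ X`
truncate `E⟦-1⟧` and rotate to get `A⟦1⟧ → E → B⟦1⟧` with `A⟦1⟧ ∈ X_T⟦1⟧ ⊆ X`; then
`B⟦1⟧ ∈ X ∩ Y_T⟦1⟧`, which lies in `H_T` and is left orthogonal to `F ⊆ Y`, hence in `T`.
So `X = ⟨T, X_T⟦1⟧⟩`.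
-/

open CategoryTheory Category Limits Pretriangulated

namespace Paper

variable {C : Type*} [Category C] [HasZeroObject C] [Preadditive C] [HasShift C ℤ]
  [∀ n : ℤ, (shiftFunctor C n).Additive] [Pretriangulated C]

/-- The shift of a class of objects: `S⟦n⟧` (closed under isomorphism). -/
def shiftSet (S : Set C) (n : ℤ) : Set C := {X | ∃ A ∈ S, Nonempty (X ≅ A⟦n⟧)}

/-- `S[≤ n] = { S⟦i⟧ ∣ S ∈ S, i ≤ n }`. -/
def shiftsLe (S : Set C) (n : ℤ) : Set C := {X | ∃ A ∈ S, ∃ i : ℤ, i ≤ n ∧ Nonempty (X ≅ A⟦i⟧)}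

/-- `S[≥ n] = { S⟦i⟧ ∣ S ∈ S, i ≥ n }`. -/
def shiftsGe (S : Set C) (n : ℤ) : Set C := {X | ∃ A ∈ S, ∃ i : ℤ, n ≤ i ∧ Nonempty (X ≅ A⟦i⟧)}

/-- `X * Y`: objects `D` fitting in a distinguished triangle `X → D → Y → X⟦1⟧`. -/
def star (X Y : Set C) : Set C :=
  {D | ∃ (A B : C) (f : A ⟶ D) (g : D ⟶ B) (h : B ⟶ A⟦(1 : ℤ)⟧),
    A ∈ X ∧ B ∈ Y ∧ Triangle.mk f g h ∈ distTriang C}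

/-- Right perpendicular class. -/
def rightPerp (S : Set C) : Set C := {D | ∀ A ∈ S, ∀ f : A ⟶ D, f = 0}

/-- Left perpendicular class. -/
def leftPerp (S : Set C) : Set C := {D | ∀ B ∈ S, ∀ f : D ⟶ B, f = 0}

/-- A t-structure `(X, Y)` on a (pre)triangulated category. -/
structure IsTStructure (X Y : Set C) : Prop where
  rp : rightPerp X = Y
  lp : leftPerp Y = X
  dec : ∀ D : C, D ∈ star X Y
  shift : shiftSet X 1 ⊆ X

/-- The heart `H = X ∩ Y⟦1⟧` of a t-structure. -/
def heart (X Y : Set C) : Set C := X ∩ shiftSet Y 1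

/-- The extension closure of a class of objects. -/
inductive ExtClosure (S : Set C) : C → Prop
  | of {A : C} (h : A ∈ S) : ExtClosure S A
  | iso {A B : C} (e : A ≅ B) (h : ExtClosure S A) : ExtClosure S B
  | ext {A E B : C} (f : A ⟶ E) (g : E ⟶ B) (h : B ⟶ A⟦(1 : ℤ)⟧)
      (hT : Triangle.mk f g h ∈ distTriang C)
      (hA : ExtClosure S A) (hB : ExtClosure S B) : ExtClosure S E

/-- The extension closure, as a set. -/
def extClosure (S : Set C) : Set C := {X | ExtClosure S X}

/-- A torsion pair `(T, F)` in the heart of a t-structure `(X, Y)`; short exact sequences in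
the heart correspond to distinguished triangles with three terms in the heart. -/
structure IsHeartTorsionPair (X Y T F : Set C) : Prop where
  subT : T ⊆ heart X Y
  subF : F ⊆ heart X Y
  rp : heart X Y ∩ rightPerp T = F
  lp : heart X Y ∩ leftPerp F = T
  dec : ∀ H₀ ∈ heart X Y, H₀ ∈ star T F

/-- A bounded t-structure. -/
def IsBounded (X Y : Set C) : Prop :=
  (∀ D : C, ∃ n : ℤ, D ∈ shiftSet X n) ∧ (∀ D : C, ∃ n : ℤ, D ∈ shiftSet Y n)

/-- A simple object of the heart of a t-structure: a nonzero object admitting no proper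
subobjects in the heart (expressed via distinguished triangles with entries in the heart). -/
def IsSimpleInHeart (X Y : Set C) (A : C) : Prop :=
  A ∈ heart X Y ∧ ¬ IsZero A ∧
  ∀ (A' B : C) (f : A' ⟶ A) (g : A ⟶ B) (h : B ⟶ A'⟦(1 : ℤ)⟧),
    Triangle.mk f g h ∈ (distTriang C) → A' ∈ heart X Y → B ∈ heart X Y →
    IsZero A' ∨ IsZero B

/-- An algebraic t-structure: a bounded t-structure whose heart is a length category with
finitely many simple objects, i.e. the heart is the extension closure of finitely many
simple objects. -/
def IsAlgebraic (X Y : Set C) : Prop :=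
  IsTStructure X Y ∧ IsBounded X Y ∧
  ∃ (t : ℕ) (G : Fin t → C), (∀ i, IsSimpleInHeart X Y (G i)) ∧
    heart X Y = extClosure (Set.range G)

/-- Thick closure: the smallest triangulated subcategory closed under direct summands. -/
inductive ThickClosure (S : Set C) : C → Prop
  | of {A : C} (h : A ∈ S) : ThickClosure S A
  | iso {A B : C} (e : A ≅ B) (h : ThickClosure S A) : ThickClosure S B
  | shift {A : C} (n : ℤ) (h : ThickClosure S A) : ThickClosure S (A⟦n⟧)
  | ext {A E B : C} (f : A ⟶ E) (g : E ⟶ B) (h : B ⟶ A⟦(1 : ℤ)⟧)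
      (hT : Triangle.mk f g h ∈ distTriang C)
      (hA : ThickClosure S A) (hB : ThickClosure S B) : ThickClosure S E
  | retract {A B : C} (s : A ⟶ B) (r : B ⟶ A) (hsr : s ≫ r = 𝟙 A)
      (h : ThickClosure S B) : ThickClosure S A

/-- Thick closure, as a set. -/
def thickClosure (S : Set C) : Set C := {X | ThickClosure S X}

/-- `Hom(S, T⟦i⟧) = 0` for all `i > 0`. -/
def vanishHomPos (S T : Set C) : Prop :=
  ∀ A ∈ S, ∀ B ∈ T, ∀ i : ℤ, 0 < i → ∀ f : A ⟶ B⟦i⟧, f = 0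

/-- A silting subcategory `S` of the (thick) subcategory `P`. -/
def IsSiltingIn (P S : Set C) : Prop :=
  S ⊆ P ∧ thickClosure S = P ∧ vanishHomPos S S

/-- The aisle `X_S = (S[≤ 0])^⊥` of the t-structure associated to a silting subcategory. -/
def siltXs (S : Set C) : Set C := rightPerp (shiftsLe S 0)

/-- The coaisle `Y_S = (S[≥ 0])^⊥` of the t-structure associated to a silting subcategory. -/
def siltYs (S : Set C) : Set C := rightPerp (shiftsGe S 0)

/-- A class of objects closed under isomorphisms, finite direct sums and direct summands. -/
def IsAddClosed [HasBinaryBiproducts C] (S : Set C) : Prop :=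
  (∀ A B : C, (A ≅ B) → A ∈ S → B ∈ S) ∧
  (∀ A B : C, A ∈ S → B ∈ S → (A ⊞ B) ∈ S) ∧
  (∀ A B : C, (∃ (s : A ⟶ B) (r : B ⟶ A), s ≫ r = 𝟙 A) → B ∈ S → A ∈ S)

/-- Silting-discreteness (relative to the subcategory `P` of compact objects, e.g.
`K^b(proj Λ)`): for every silting subcategory `S` of `P` there are only finitely many silting
subcategories `T` with `S ≥ T ≥ S⟦1⟧`. -/
def IsSiltingDiscrete [HasBinaryBiproducts C] (P : Set C) : Prop :=
  ∀ S : Set C, IsSiltingIn P S → IsAddClosed S →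
    {T : Set C | IsSiltingIn P T ∧ IsAddClosed T ∧
      vanishHomPos S T ∧ vanishHomPos T (shiftSet S 1)}.Finite

/-- A t-structure on a full (pre)triangulated subcategory `B` of the ambient category. -/
structure IsTStructureOn (B X Y : Set C) : Prop where
  subX : X ⊆ B
  subY : Y ⊆ B
  rp : B ∩ rightPerp X = Y
  lp : B ∩ leftPerp Y = X
  dec : ∀ D ∈ B, D ∈ star X Y
  shift : shiftSet X 1 ⊆ X

section Perp

omit [HasZeroObject C] [HasShift C ℤ] [∀ n : ℤ, (shiftFunctor C n).Additive] [Pretriangulated C]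

lemma subset_leftPerp_iff {S S' : Set C} : S ⊆ leftPerp S' ↔ S' ⊆ rightPerp S :=
  ⟨fun h _ hB _ hA f => h hA _ hB f, fun h _ hA _ hB f => h hB _ hA f⟩

lemma rightPerp_anti {S S' : Set C} (h : S ⊆ S') : rightPerp S' ⊆ rightPerp S :=
  fun _ hD _ hA => hD _ (h hA)

lemma leftPerp_anti {S S' : Set C} (h : S ⊆ S') : leftPerp S' ⊆ leftPerp S :=
  fun _ hD _ hB => hD _ (h hB)

lemma mem_rightPerp_of_iso {S : Set C} {A B : C} (e : A ≅ B) (hA : A ∈ rightPerp S) :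
    B ∈ rightPerp S := fun W hW f => by
  simpa using congrArg (· ≫ e.hom) (hA W hW (f ≫ e.inv))

lemma mem_leftPerp_of_iso {S : Set C} {A B : C} (e : A ≅ B) (hA : A ∈ leftPerp S) :
    B ∈ leftPerp S := fun W hW f => by
  simpa using congrArg (e.inv ≫ ·) (hA W hW (e.hom ≫ f))

end Perp

section Shift

omit [HasZeroObject C] [Pretriangulated C]

lemma shiftSet_one_subset_leftPerp {S S' : Set C} (h : S ⊆ leftPerp S') :
    shiftSet S 1 ⊆ leftPerp (shiftSet S' 1) := by
  rintro _ ⟨A, hA, ⟨e⟩⟩ _ ⟨B, hB, ⟨e'⟩⟩ f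
  obtain ⟨g, hg⟩ := (shiftFunctor C (1 : ℤ)).map_surjective (e.inv ≫ f ≫ e'.hom)
  have : e.inv ≫ f ≫ e'.hom = 0 := by rw [← hg, h hA B hB g, Functor.map_zero]
  simpa using congrArg (e.hom ≫ · ≫ e'.inv) this

lemma shift_neg_one_mem_rightPerp {S : Set C} (hS : shiftSet S 1 ⊆ S) {W : C}
    (hW : W ∈ rightPerp S) : W⟦(-1 : ℤ)⟧ ∈ rightPerp S := fun A hA f => by
  apply (shiftFunctor C (1 : ℤ)).map_injective
  rw [Functor.map_zero, ← cancel_mono ((shiftFunctorCompIsoId C (-1) 1 (by norm_num)).hom.app W),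
    zero_comp]
  exact hW _ (hS ⟨A, hA, ⟨Iso.refl _⟩⟩) _

end Shift

lemma mem_rightPerp_obj₂ {S : Set C} {T : Triangle C} (hT : T ∈ distTriang C)
    (h₁ : T.obj₁ ∈ rightPerp S) (h₃ : T.obj₃ ∈ rightPerp S) : T.obj₂ ∈ rightPerp S := by
  intro A hA f
  obtain ⟨g, rfl⟩ := Triangle.coyoneda_exact₂ T hT f (h₃ A hA _)
  rw [h₁ A hA g, zero_comp]

lemma mem_rightPerp_obj₁ {S : Set C} {T : Triangle C} (hT : T ∈ distTriang C)
    (h₂ : T.obj₂ ∈ rightPerp S) (h₃ : T.obj₃⟦(-1 : ℤ)⟧ ∈ rightPerp S) :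
    T.obj₁ ∈ rightPerp S :=
  mem_rightPerp_obj₂ (inv_rot_of_distTriang T hT) h₃ h₂

lemma mem_leftPerp_obj₂ {S : Set C} {T : Triangle C} (hT : T ∈ distTriang C)
    (h₁ : T.obj₁ ∈ leftPerp S) (h₃ : T.obj₃ ∈ leftPerp S) : T.obj₂ ∈ leftPerp S := by
  intro B hB f
  obtain ⟨g, rfl⟩ := Triangle.yoneda_exact₂ T hT f (h₁ B hB _)
  rw [h₃ B hB g, comp_zero]

lemma mem_leftPerp_obj₃ {S : Set C} {T : Triangle C} (hT : T ∈ distTriang C)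
    (h₂ : T.obj₂ ∈ leftPerp S) (h₁ : T.obj₁⟦(1 : ℤ)⟧ ∈ leftPerp S) :
    T.obj₃ ∈ leftPerp S :=
  mem_leftPerp_obj₂ (rot_of_distTriang T hT) h₂ h₁

lemma extClosure_subset_rightPerp {S S' : Set C} (h : S' ⊆ rightPerp S) :
    extClosure S' ⊆ rightPerp S := by
  intro _ hD
  induction hD with
  | of hA => exact h hA
  | iso e _ ih => exact mem_rightPerp_of_iso e ih
  | ext _ _ _ hT _ _ ih₁ ih₃ => exact mem_rightPerp_obj₂ hT ih₁ ih₃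

lemma extClosure_subset_leftPerp {S S' : Set C} (h : S' ⊆ leftPerp S) :
    extClosure S' ⊆ leftPerp S := by
  intro _ hD
  induction hD with
  | of hA => exact h hA
  | iso e _ ih => exact mem_leftPerp_of_iso e ih
  | ext _ _ _ hT _ _ ih₁ ih₃ => exact mem_leftPerp_obj₂ hT ih₁ ih₃

namespace IsTStructure

variable {X Y : Set C}

lemma mem_shiftSet_one_iff (h : IsTStructure X Y) {D : C} :
    D ∈ shiftSet Y 1 ↔ D⟦(-1 : ℤ)⟧ ∈ Y := by
  constructor
  · rintro ⟨D₀, hD₀, ⟨e⟩⟩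
    rw [← h.rp] at hD₀ ⊢
    exact mem_rightPerp_of_iso ((shiftFunctor C (-1 : ℤ)).mapIso e ≪≫
      (shiftFunctorCompIsoId C 1 (-1) (by norm_num)).app D₀).symm hD₀
  · exact fun hD => ⟨_, hD, ⟨((shiftFunctorCompIsoId C (-1) 1 (by norm_num)).app D).symm⟩⟩

lemma shift_neg_one_mem (h : IsTStructure X Y) {W : C} (hW : W ∈ Y) : W⟦(-1 : ℤ)⟧ ∈ Y :=
  h.rp ▸ shift_neg_one_mem_rightPerp h.shift (h.rp ▸ hW)

lemma extClosure_subset_coaisle (h : IsTStructure X Y) {S : Set C} (hS : S ⊆ Y) :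
    extClosure S ⊆ Y :=
  h.rp ▸ extClosure_subset_rightPerp (h.rp ▸ hS)

lemma extClosure_subset_aisle (h : IsTStructure X Y) {S : Set C} (hS : S ⊆ X) :
    extClosure S ⊆ X :=
  h.lp ▸ extClosure_subset_leftPerp (h.lp ▸ hS)

end IsTStructure

section Tilting

variable {XT YT X Y T : Set C}

lemma coaisle_eq_extClosure (hT : IsTStructure XT YT) (h : IsTStructure X Y)
    (h1 : YT ⊆ Y) (h2 : Y ⊆ shiftSet YT 1) :
    Y = extClosure (YT ∪ (heart XT YT ∩ Y)) := by
  refine subset_antisymm (fun D hD => ?_)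
    (h.extClosure_subset_coaisle (Set.union_subset h1 Set.inter_subset_right))
  obtain ⟨A, B, f, g, k, hA, hB, hdist⟩ := hT.dec D
  have hAY : A ∈ Y := h.rp ▸ mem_rightPerp_obj₁ hdist (h.rp ▸ hD)
    (h.rp ▸ h.shift_neg_one_mem (h1 hB))
  have hAYT : A⟦(-1 : ℤ)⟧ ∈ YT := hT.rp ▸ mem_rightPerp_obj₁
    (inv_rot_of_distTriang _ (inv_rot_of_distTriang _ (inv_rot_of_distTriang _ hdist)))
    (hT.rp ▸ hT.mem_shiftSet_one_iff.mp (h2 hD))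
    (hT.rp ▸ hT.shift_neg_one_mem (hT.shift_neg_one_mem hB))
  exact .ext f g k hdist (.of (.inr ⟨⟨hA, hT.mem_shiftSet_one_iff.mpr hAYT⟩, hAY⟩)) (.of (.inl hB))

lemma shiftSet_one_subset_aisle (hT : IsTStructure XT YT) (h : IsTStructure X Y)
    (h2 : Y ⊆ shiftSet YT 1) : shiftSet XT 1 ⊆ X :=
  h.lp ▸ (shiftSet_one_subset_leftPerp (hT.lp ▸ subset_rfl)).trans (leftPerp_anti h2)

lemma torsion_subset_aisle (hT : IsTStructure XT YT) (h : IsTStructure X Y)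
    (h1 : YT ⊆ Y) (h2 : Y ⊆ shiftSet YT 1)
    (htp : IsHeartTorsionPair XT YT T (heart XT YT ∩ Y)) : T ⊆ X := by
  rw [← h.lp, subset_leftPerp_iff, coaisle_eq_extClosure hT h h1 h2]
  refine extClosure_subset_rightPerp (Set.union_subset ?_ ?_)
  · exact hT.rp ▸ rightPerp_anti fun _ hA => (htp.subT hA).1
  · exact htp.rp ▸ Set.inter_subset_right

lemma aisle_inter_shiftSet_subset_torsion (hT : IsTStructure XT YT) (h : IsTStructure X Y)
    (h1 : YT ⊆ Y) (htp : IsHeartTorsionPair XT YT T (heart XT YT ∩ Y)) :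
    X ∩ shiftSet YT 1 ⊆ T := by
  rintro E ⟨hEX, hEY⟩
  rw [← h.lp] at hEX
  rw [← htp.lp]
  exact ⟨⟨hT.lp ▸ leftPerp_anti h1 hEX, hEY⟩, leftPerp_anti Set.inter_subset_right hEX⟩

lemma aisle_eq_extClosure (hT : IsTStructure XT YT) (h : IsTStructure X Y)
    (h1 : YT ⊆ Y) (h2 : Y ⊆ shiftSet YT 1)
    (htp : IsHeartTorsionPair XT YT T (heart XT YT ∩ Y)) :
    X = extClosure (T ∪ shiftSet XT 1) := by
  have hXT : shiftSet XT 1 ⊆ X := shiftSet_one_subset_aisle hT h h2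
  refine subset_antisymm (fun E hE => ?_)
    (h.extClosure_subset_aisle (Set.union_subset (torsion_subset_aisle hT h h1 h2 htp) hXT))
  obtain ⟨A, B, _, _, _, hA, hB, hdist⟩ := hT.dec (E⟦(-1 : ℤ)⟧)
  have hrot := rot_of_distTriang _ (rot_of_distTriang _ (rot_of_distTriang _ hdist))
  have eE : E⟦(-1 : ℤ)⟧⟦(1 : ℤ)⟧ ≅ E := (shiftFunctorCompIsoId C (-1) 1 (by norm_num)).app E
  have hA₁ : A⟦(1 : ℤ)⟧ ∈ shiftSet XT 1 := ⟨A, hA, ⟨Iso.refl _⟩⟩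
  have hBX : B⟦(1 : ℤ)⟧ ∈ X := h.lp ▸ mem_leftPerp_obj₃ hrot
    (mem_leftPerp_of_iso eE.symm (h.lp ▸ hE))
    (h.lp ▸ hXT ⟨_, hT.shift hA₁, ⟨Iso.refl _⟩⟩)
  have hBT : B⟦(1 : ℤ)⟧ ∈ T :=
    aisle_inter_shiftSet_subset_torsion hT h h1 htp ⟨hBX, B, hB, ⟨Iso.refl _⟩⟩
  exact .iso eE (.ext _ _ _ hrot (.of (.inr hA₁)) (.of (.inl hBT)))

end Tilting

/-- Given t-structures `(X_T, Y_T)` and `(X, Y)` with `Y_T ⊆ Y ⊆ Y_T⟦1⟧`, if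
`(T, F)` with `F = H_T ∩ Y` is a torsion pair in the heart `H_T`, then
`Y = ⟨Y_T, F⟩`, and setting `Y₁ = Y_T⟦1⟧ ∩ Y`, `X₁ = ^⊥Y₁`, the pair `(X₁, Y₁)` is a
t-structure, namely the HRS-tilt `(⟨T, X_T⟦1⟧⟩, ⟨Y_T, F⟩)` of `(X_T, Y_T)` at `(T, F)`. -/
theorem statement5 (XT YT X Y T : Set C)
    (hTstr : IsTStructure XT YT) (h : IsTStructure X Y)
    (h1 : YT ⊆ Y) (h2 : Y ⊆ shiftSet YT 1)
    (htp : IsHeartTorsionPair XT YT T (heart XT YT ∩ Y)) :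
    Y = extClosure (YT ∪ (heart XT YT ∩ Y)) ∧
    IsTStructure (leftPerp (shiftSet YT 1 ∩ Y)) (shiftSet YT 1 ∩ Y) ∧
    leftPerp (shiftSet YT 1 ∩ Y) = extClosure (T ∪ shiftSet XT 1) ∧
    shiftSet YT 1 ∩ Y = extClosure (YT ∪ (heart XT YT ∩ Y)) := by
  have hY := coaisle_eq_extClosure hTstr h h1 h2
  rw [Set.inter_eq_self_of_subset_right h2, h.lp]
  exact ⟨hY, h, aisle_eq_extClosure hTstr h h1 h2 htp, hY⟩

end Paper
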